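/- arXiv:0911.4247 — 3 statements merged into one kernel-verified Lean document; each statement's English description precedes it below -/
import Mathlib

section
/- Let (E, ‖·‖) be a Euclidean space, E₁ a subspace with orthogonal projection pr₁, and for x ∈ E write |x|₁ = ‖pr₁(x)‖. For each δ > 0 fix a constant C''_δ ≥ 0 and let I_δ be the set of pairs (x, x') ∈ E² with x ∈ E₁, |x' − x|₁ ≤ 2δ‖x‖ + C''_δ, and ‖x'‖ ≤ (1 + δ)‖x‖ + C''_δ. Then the supremum over (x, x') ∈ I_δ with x ≠ 0 of (‖x' − x‖ − 4C''_δ/δ)/‖x‖ tends to 0 as δ → 0. -/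
open Filter Set

private lemma aux_real (δ C a b c n s : ℝ) (hδ : 0 < δ) (hδ4 : δ < 1/4) (hC : 0 ≤ C)
    (ha : 0 < a) (hb0 : 0 ≤ b) (hc0 : 0 ≤ c) (hs0 : 0 ≤ s) (hs2 : s ^ 2 = 6 * δ)
    (hn1 : n ≤ b + c) (hn2 : n ≤ (2 + δ) * a + C)
    (hb : b ≤ 2 * δ * a + C)
    (hcsq : c ^ 2 + (a - b) ^ 2 ≤ ((1 + δ) * a + C) ^ 2) :
    (n - 4 * C / δ) / a ≤ 3 * δ + s := by
  have hCd : C ≤ C / δ := by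
    rw [le_div_iff₀ hδ]; nlinarith
  have hCd0 : 0 ≤ C / δ := div_nonneg hC hδ.le
  rw [div_le_iff₀ ha]
  by_cases h : 2 * δ * a + C ≤ a
  · -- main case
    have hc2 : c ^ 2 ≤ 6 * δ * a ^ 2 + 4 * C * a := by
      nlinarith [mul_nonneg (show (0:ℝ) ≤ 2 * δ * a + C - b by linarith)
          (show (0:ℝ) ≤ (a - b) + (a - 2 * δ * a - C) by linarith),
        mul_nonneg (mul_nonneg hδ.le hC) ha.le, sq_nonneg (δ * a)]
    have hCdiv : C / δ * δ = C := div_mul_cancel₀ C hδ.ne'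
    have hR0 : 0 ≤ s * a + δ * a + C / δ := by positivity
    have hc : c ≤ s * a + δ * a + C / δ := by
      refine le_of_pow_le_pow_left₀ two_ne_zero hR0 ?_
      have key : (δ * a + C / δ) ^ 2 ≥ 4 * C * a := by
        nlinarith [sq_nonneg (δ * a - C / δ)]
      nlinarith [mul_nonneg (mul_nonneg hs0 ha.le) (show (0:ℝ) ≤ δ * a + C / δ by positivity)]
    have h4 : 4 * C / δ = 4 * (C / δ) := by ring
    rw [h4]
    nlinarith [hn1, hb, hc, hCd, hCd0]
  · -- small-norm case : a < 2δa + C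
    push_neg at h
    have haC : a < 2 * C := by nlinarith
    have h16 : 16 * C ≤ 4 * C / δ := by
      rw [le_div_iff₀ hδ]; nlinarith
    have hpos : 0 ≤ (3 * δ + s) * a := by positivity
    nlinarith [mul_pos hδ ha]

/-- Lemma 5.3 of the paper: the sup over the δ-dependent set `I_δ` of
`(‖x' − x‖ − 4C''_δ/δ)/‖x‖` tends to 0 as δ → 0⁺. -/
theorem stmt0 {E : Type*} [NormedAddCommGroup E] [InnerProductSpace ℝ E]
    [FiniteDimensional ℝ E] (E₁ : Submodule ℝ E)
    (C : ℝ → ℝ) (hC : ∀ δ : ℝ, 0 < δ → 0 ≤ C δ) :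
    Filter.Tendsto
      (fun δ : ℝ =>
        sSup {r : ℝ | ∃ x x' : E, x ∈ E₁ ∧ x ≠ 0 ∧
          ‖(Submodule.orthogonalProjectionOnto E₁ (x' - x) : E₁)‖ ≤ 2 * δ * ‖x‖ + C δ ∧
          ‖x'‖ ≤ (1 + δ) * ‖x‖ + C δ ∧
          r = (‖x' - x‖ - 4 * C δ / δ) / ‖x‖})
      (nhdsWithin 0 (Set.Ioi 0)) (nhds 0) := by
  set S : ℝ → Set ℝ := fun δ => {r : ℝ | ∃ x x' : E, x ∈ E₁ ∧ x ≠ 0 ∧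
      ‖(Submodule.orthogonalProjectionOnto E₁ (x' - x) : E₁)‖ ≤ 2 * δ * ‖x‖ + C δ ∧
      ‖x'‖ ≤ (1 + δ) * ‖x‖ + C δ ∧
      r = (‖x' - x‖ - 4 * C δ / δ) / ‖x‖} with hSdef
  have key : ∀ δ : ℝ, δ ∈ Set.Ioo (0:ℝ) (1/4) → ∀ r ∈ S δ, r ≤ 3 * δ + Real.sqrt (6 * δ) := by
    rintro δ ⟨hδ, hδ4⟩ r ⟨x, x', hx, hx0, h1, h2, hr⟩
    have ha : 0 < ‖x‖ := norm_pos_iff.mpr hx0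
    have hpy : ‖x' - x‖ ^ 2 = ‖Submodule.orthogonalProjectionOnto E₁ (x' - x)‖ ^ 2
        + ‖Submodule.orthogonalProjectionOnto E₁ᗮ (x' - x)‖ ^ 2 :=
      Submodule.norm_sq_eq_add_norm_sq_projection (x' - x) E₁
    set b := ‖Submodule.orthogonalProjectionOnto E₁ (x' - x)‖ with hbdef
    set c := ‖Submodule.orthogonalProjectionOnto E₁ᗮ (x' - x)‖ with hcdef
    have hb0 : 0 ≤ b := norm_nonneg _
    have hc0 : 0 ≤ c := norm_nonneg _
    have hn1 : ‖x' - x‖ ≤ b + c := by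
      refine le_of_pow_le_pow_left₀ two_ne_zero (by positivity) ?_
      nlinarith [mul_nonneg hb0 hc0]
    have hQx : Submodule.orthogonalProjectionOnto E₁ᗮ x = 0 :=
      Submodule.orthogonalProjectionOnto_apply_of_mem_orthogonal
        (E₁.le_orthogonal_orthogonal hx)
    have hQx' : Submodule.orthogonalProjectionOnto E₁ᗮ x' = Submodule.orthogonalProjectionOnto E₁ᗮ (x' - x) := by
      rw [map_sub, hQx, sub_zero]
    have hpyth' : ‖x'‖ ^ 2 = ‖Submodule.orthogonalProjectionOnto E₁ x'‖ ^ 2 + c ^ 2 := by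
      rw [Submodule.norm_sq_eq_add_norm_sq_projection x' E₁, hQx']
    have hPx'c : (Submodule.orthogonalProjectionOnto E₁ x' : E)
        = x + (Submodule.orthogonalProjectionOnto E₁ (x' - x) : E) := by
      conv_lhs => rw [show x' = x + (x' - x) by abel]
      rw [map_add]
      push_cast
      congr 1
      exact Submodule.starProjection_eq_self_iff.mpr hx
    have habs : |‖x‖ - b| ≤ ‖Submodule.orthogonalProjectionOnto E₁ x'‖ := by
      have h := abs_norm_sub_norm_le x (-(Submodule.orthogonalProjectionOnto E₁ (x' - x) : E))
      rw [norm_neg, sub_neg_eq_add, ← hPx'c] at h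
      rw [hbdef, Submodule.coe_norm, Submodule.coe_norm]
      exact h
    have hcsq : c ^ 2 + (‖x‖ - b) ^ 2 ≤ ((1 + δ) * ‖x‖ + C δ) ^ 2 := by
      have h3 : (‖x‖ - b) ^ 2 ≤ ‖Submodule.orthogonalProjectionOnto E₁ x'‖ ^ 2 := by
        rw [← sq_abs (‖x‖ - b)]
        exact pow_le_pow_left₀ (abs_nonneg _) habs 2
      have h4 : ‖x'‖ ^ 2 ≤ ((1 + δ) * ‖x‖ + C δ) ^ 2 :=
        pow_le_pow_left₀ (norm_nonneg _) h2 2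
      nlinarith
    have hn2 : ‖x' - x‖ ≤ (2 + δ) * ‖x‖ + C δ := by
      have h5 := norm_sub_le x' x
      linarith
    rw [hr]
    exact aux_real δ (C δ) ‖x‖ b c ‖x' - x‖ (Real.sqrt (6 * δ)) hδ hδ4 (hC δ hδ) ha hb0 hc0
      (Real.sqrt_nonneg _) (Real.sq_sqrt (by linarith)) hn1 hn2 h1 hcsq
  have hbdd : ∀ δ : ℝ, δ ∈ Set.Ioo (0:ℝ) (1/4) → BddAbove (S δ) :=
    fun δ hδ => ⟨_, key δ hδ⟩
  have hub : ∀ δ : ℝ, δ ∈ Set.Ioo (0:ℝ) (1/4) → sSup (S δ) ≤ 3 * δ + Real.sqrt (6 * δ) := by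
    intro δ hδ
    exact Real.sSup_le (key δ hδ) (by nlinarith [Real.sqrt_nonneg (6 * δ), hδ.1])
  have hge : ∀ δ : ℝ, δ ∈ Set.Ioo (0:ℝ) (1/4) → 0 ≤ sSup (S δ) := by
    rintro δ ⟨hδ, hδ4⟩
    by_cases hE : ∃ v, v ∈ E₁ ∧ v ≠ 0
    · obtain ⟨v, hv, hv0⟩ := hE
      have hvn : 0 < ‖v‖ := norm_pos_iff.mpr hv0
      have hC0 : 0 ≤ C δ := hC δ hδ
      have hmem : ∀ t : ℝ, 0 < t → ((0:ℝ) - 4 * C δ / δ) / ‖t • v‖ ∈ S δ := by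
        intro t ht
        refine ⟨t • v, t • v, E₁.smul_mem t hv, ?_, ?_, ?_, ?_⟩
        · simp [smul_eq_zero, hv0, ht.ne']
        · rw [sub_self, map_zero, norm_zero]
          have h2δ : 0 ≤ 2 * δ * ‖t • v‖ := mul_nonneg (by linarith) (norm_nonneg _)
          linarith
        · nlinarith [norm_nonneg (t • v), mul_nonneg hδ.le (norm_nonneg (t • v))]
        · rw [sub_self, norm_zero]
      have hne : (S δ).Nonempty := ⟨_, hmem 1 one_pos⟩
      rw [Real.le_sSup_iff (hbdd δ ⟨hδ, hδ4⟩) hne]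
      intro ε hε
      have hεv : 0 < (-ε) * ‖v‖ := mul_pos (neg_pos.mpr hε) hvn
      have hK0 : 0 ≤ 4 * C δ / δ := div_nonneg (by linarith) hδ.le
      have ht : 0 < (4 * C δ / δ + 1) / ((-ε) * ‖v‖) := div_pos (by linarith) hεv
      refine ⟨_, hmem ((4 * C δ / δ + 1) / ((-ε) * ‖v‖)) ht, ?_⟩
      rw [norm_smul, Real.norm_eq_abs, abs_of_pos ht]
      have htv : (4 * C δ / δ + 1) / ((-ε) * ‖v‖) * ‖v‖ = (4 * C δ / δ + 1) / (-ε) := by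
        rw [div_mul_eq_mul_div, mul_div_mul_right _ _ hvn.ne']
      rw [htv, zero_add, zero_sub, div_div_eq_mul_div,
        lt_div_iff₀ (by linarith : (0:ℝ) < 4 * C δ / δ + 1)]
      nlinarith [hε, hK0]
    · have hempty : S δ = ∅ := by
        push_neg at hE
        ext r
        simp only [hSdef, Set.mem_setOf_eq, Set.mem_empty_iff_false, iff_false]
        rintro ⟨x, x', hx, hx0, -⟩
        exact hx0 (hE x hx)
      rw [hempty, Real.sSup_empty]
  have hIoo : Set.Ioo (0:ℝ) (1/4) ∈ nhdsWithin (0:ℝ) (Set.Ioi 0) :=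
    Ioo_mem_nhdsGT_of_mem ⟨le_refl 0, by norm_num⟩
  have htends : Tendsto (fun δ : ℝ => 3 * δ + Real.sqrt (6 * δ))
      (nhdsWithin 0 (Set.Ioi 0)) (nhds 0) := by
    have hcont : Continuous fun δ : ℝ => 3 * δ + Real.sqrt (6 * δ) :=
      (continuous_const.mul continuous_id).add
        (Real.continuous_sqrt.comp (continuous_const.mul continuous_id))
    have h0 := hcont.tendsto 0
    simp only [mul_zero, Real.sqrt_zero, add_zero] at h0
    exact h0.mono_left nhdsWithin_le_nhds
  have hfinal : Tendsto (fun δ : ℝ => sSup (S δ)) (nhdsWithin 0 (Set.Ioi 0)) (nhds 0) :=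
    squeeze_zero' (Filter.eventually_of_mem hIoo fun δ hδ => hge δ hδ)
      (Filter.eventually_of_mem hIoo fun δ hδ => hub δ hδ) htends
  exact hfinal
end

section
/- For m ≥ 2, the Lie algebra so(m, 2) decomposes as an so(m, 1)-module into the direct sum so(m, 1) ⊕ ℝ^{m+1}, where so(m, 1) acts by the adjoint action on the first summand and by the natural (standard) representation on the second; consequently, the only Lie subalgebra of so(m, 2) strictly containing so(m, 1) is so(m, 2) itself. -/
/-- The matrix of the quadratic form `x₁² + ⋯ + x_m² − x_{m+1}² − x_{m+2}²`. -/
def stmt10.eta (m : ℕ) : Matrix (Fin (m + 2)) (Fin (m + 2)) ℝ :=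
  Matrix.diagonal (fun i => if (i : ℕ) < m then (1 : ℝ) else -1)

/-- Membership in `so(m, 2)`. -/
def stmt10.so2mem (m : ℕ) (X : Matrix (Fin (m + 2)) (Fin (m + 2)) ℝ) : Prop :=
  X.transpose * stmt10.eta m + stmt10.eta m * X = 0

/-- Membership in `so(m, 1)`, embedded block-diagonally as the subalgebra of `so(m, 2)`
annihilating the last basis vector. -/
def stmt10.so1mem (m : ℕ) (X : Matrix (Fin (m + 2)) (Fin (m + 2)) ℝ) : Prop :=
  stmt10.so2mem m X ∧
    ∀ i : Fin (m + 2), X i (Fin.last (m + 1)) = 0 ∧ X (Fin.last (m + 1)) i = 0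

/-- Membership in the complementary `so(m,1)`-submodule `m ≃ ℝ^{m+1}` of `so(m, 2)`:
only the last row and column may be nonzero. -/
def stmt10.cmem (m : ℕ) (X : Matrix (Fin (m + 2)) (Fin (m + 2)) ℝ) : Prop :=
  stmt10.so2mem m X ∧
    ∀ i j : Fin (m + 2), i ≠ Fin.last (m + 1) → j ≠ Fin.last (m + 1) → X i j = 0

namespace aux10
open stmt10

variable {m : ℕ}

noncomputable def eps (m : ℕ) (i : Fin (m + 2)) : ℝ := if (i : ℕ) < m then 1 else -1

noncomputable def sgn (m : ℕ) (j : Fin (m + 1)) : ℝ := if (j : ℕ) < m then 1 else -1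

lemma eta_eq (m : ℕ) : eta m = Matrix.diagonal (eps m) := rfl

lemma so2_iff (X : Matrix (Fin (m + 2)) (Fin (m + 2)) ℝ) :
    so2mem m X ↔ ∀ i j, X j i * eps m j + eps m i * X i j = 0 := by
  unfold so2mem
  rw [eta_eq, ← Matrix.ext_iff]
  simp [Matrix.mul_diagonal, Matrix.diagonal_mul, Matrix.add_apply]

lemma eps_last : eps m (Fin.last (m + 1)) = -1 := by
  simp [eps, Fin.last]

lemma eps_castSucc (j : Fin (m + 1)) : eps m j.castSucc = sgn m j := by
  simp [eps, sgn]

lemma sgn_mul_self (j : Fin (m + 1)) : sgn m j * sgn m j = 1 := by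
  unfold sgn; split_ifs <;> norm_num

lemma sgn_ne_zero (j : Fin (m + 1)) : sgn m j ≠ 0 := by
  unfold sgn; split_ifs <;> norm_num

/-- diagonal last entry of an so2 matrix vanishes -/
lemma so2_last_last {X : Matrix (Fin (m + 2)) (Fin (m + 2)) ℝ} (h : so2mem m X) :
    X (Fin.last (m + 1)) (Fin.last (m + 1)) = 0 := by
  have := (so2_iff X).mp h (Fin.last (m + 1)) (Fin.last (m + 1))
  rw [eps_last] at this
  linarith

/-- relation between last row and last column of an so2 matrix -/
lemma so2_last_row {X : Matrix (Fin (m + 2)) (Fin (m + 2)) ℝ} (h : so2mem m X)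
    (j : Fin (m + 2)) : X (Fin.last (m + 1)) j = eps m j * X j (Fin.last (m + 1)) := by
  have := (so2_iff X).mp h (Fin.last (m + 1)) j
  rw [eps_last] at this
  linarith

def proj1 (m : ℕ) (X : Matrix (Fin (m + 2)) (Fin (m + 2)) ℝ) :
    Matrix (Fin (m + 2)) (Fin (m + 2)) ℝ :=
  Matrix.of fun i j => if i = Fin.last (m + 1) ∨ j = Fin.last (m + 1) then 0 else X i j

def proj2 (m : ℕ) (X : Matrix (Fin (m + 2)) (Fin (m + 2)) ℝ) :
    Matrix (Fin (m + 2)) (Fin (m + 2)) ℝ :=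
  Matrix.of fun i j => if i = Fin.last (m + 1) ∨ j = Fin.last (m + 1) then X i j else 0

lemma proj1_so1 {X : Matrix (Fin (m + 2)) (Fin (m + 2)) ℝ} (h : so2mem m X) :
    so1mem m (proj1 m X) := by
  refine ⟨(so2_iff _).mpr fun i j => ?_, fun i => by simp [proj1]⟩
  have := (so2_iff X).mp h i j
  simp only [proj1, Matrix.of_apply]
  split_ifs with h1 h2 h2 <;> simp_all <;> linarith

lemma proj2_cmem {X : Matrix (Fin (m + 2)) (Fin (m + 2)) ℝ} (h : so2mem m X) :
    cmem m (proj2 m X) := by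
  refine ⟨(so2_iff _).mpr fun i j => ?_, fun i j hi hj => by simp [proj2, hi, hj]⟩
  have := (so2_iff X).mp h i j
  simp only [proj2, Matrix.of_apply]
  split_ifs with h1 h2 h2 <;> simp_all <;> linarith

lemma proj_add (X : Matrix (Fin (m + 2)) (Fin (m + 2)) ℝ) :
    X = proj1 m X + proj2 m X := by
  ext i j
  simp only [Matrix.add_apply, proj1, proj2, Matrix.of_apply]
  split_ifs <;> ring


lemma castSucc_ne_last (i : Fin (m + 1)) : i.castSucc ≠ Fin.last (m + 1) :=
  (Fin.castSucc_lt_last i).ne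

/-- explicit element of the complement with prescribed last column -/
noncomputable def Zmat (m : ℕ) (c : Fin (m + 1) → ℝ) :
    Matrix (Fin (m + 2)) (Fin (m + 2)) ℝ :=
  Matrix.of fun i j =>
    if h1 : j = Fin.last (m + 1) ∧ i ≠ Fin.last (m + 1) then c (i.castPred h1.2)
    else if h2 : i = Fin.last (m + 1) ∧ j ≠ Fin.last (m + 1) then
      sgn m (j.castPred h2.2) * c (j.castPred h2.2)
    else 0

lemma Zmat_apply_col (c : Fin (m + 1) → ℝ) {i : Fin (m + 2)} (hi : i ≠ Fin.last (m + 1)) :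
    Zmat m c i (Fin.last (m + 1)) = c (i.castPred hi) := by
  simp [Zmat, hi]

lemma Zmat_apply_row (c : Fin (m + 1) → ℝ) {j : Fin (m + 2)} (hj : j ≠ Fin.last (m + 1)) :
    Zmat m c (Fin.last (m + 1)) j = sgn m (j.castPred hj) * c (j.castPred hj) := by
  simp [Zmat, hj]

lemma Zmat_apply_last_last (c : Fin (m + 1) → ℝ) :
    Zmat m c (Fin.last (m + 1)) (Fin.last (m + 1)) = 0 := by
  simp [Zmat]

lemma Zmat_apply_ne (c : Fin (m + 1) → ℝ) {i j : Fin (m + 2)}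
    (hi : i ≠ Fin.last (m + 1)) (hj : j ≠ Fin.last (m + 1)) : Zmat m c i j = 0 := by
  simp [Zmat, hi, hj]

lemma Zmat_col (c : Fin (m + 1) → ℝ) (i : Fin (m + 1)) :
    Zmat m c i.castSucc (Fin.last (m + 1)) = c i := by
  rw [Zmat_apply_col c (castSucc_ne_last i), Fin.castPred_castSucc]

lemma eps_ne_last {j : Fin (m + 2)} (hj : j ≠ Fin.last (m + 1)) :
    eps m j = sgn m (j.castPred hj) := by
  rw [← eps_castSucc, Fin.castSucc_castPred]

lemma Zmat_so2 (c : Fin (m + 1) → ℝ) : so2mem m (Zmat m c) := by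
  rw [so2_iff]
  intro i j
  by_cases hi : i = Fin.last (m + 1) <;> by_cases hj : j = Fin.last (m + 1)
  · subst hi; subst hj; rw [Zmat_apply_last_last]; ring
  · subst hi
    rw [Zmat_apply_col c hj, Zmat_apply_row c hj, eps_last, eps_ne_last hj]
    ring
  · subst hj
    rw [Zmat_apply_col c hi, Zmat_apply_row c hi, eps_last, eps_ne_last hi]
    ring
  · rw [Zmat_apply_ne c hj hi, Zmat_apply_ne c hi hj]; ring

lemma Zmat_cmem (c : Fin (m + 1) → ℝ) : cmem m (Zmat m c) :=
  ⟨Zmat_so2 c, fun _ _ hi hj => Zmat_apply_ne c hi hj⟩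

lemma cmem_eq_Zmat {Z : Matrix (Fin (m + 2)) (Fin (m + 2)) ℝ} (h : cmem m Z) :
    Z = Zmat m (fun i => Z i.castSucc (Fin.last (m + 1))) := by
  ext i j
  by_cases hi : i = Fin.last (m + 1) <;> by_cases hj : j = Fin.last (m + 1)
  · subst hi; subst hj
    rw [so2_last_last h.1, Zmat_apply_last_last]
  · subst hi
    rw [Zmat_apply_row _ hj, so2_last_row h.1 j, Fin.castSucc_castPred, eps_ne_last hj]
  · subst hj
    rw [Zmat_apply_col _ hi, Fin.castSucc_castPred]
  · rw [h.2 i j hi hj, Zmat_apply_ne _ hi hj]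

lemma Zmat_add (c d : Fin (m + 1) → ℝ) : Zmat m (c + d) = Zmat m c + Zmat m d := by
  ext i j
  simp only [Zmat, Matrix.of_apply, Matrix.add_apply, Pi.add_apply]
  split_ifs <;> ring

lemma Zmat_smul (r : ℝ) (c : Fin (m + 1) → ℝ) : Zmat m (r • c) = r • Zmat m c := by
  ext i j
  simp only [Zmat, Matrix.of_apply, Matrix.smul_apply, Pi.smul_apply, smul_eq_mul]
  split_ifs <;> ring

lemma Zmat_zero : Zmat m (0 : Fin (m + 1) → ℝ) = 0 := by
  ext i j
  simp only [Zmat, Matrix.of_apply, Matrix.zero_apply, Pi.zero_apply]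
  split_ifs <;> ring


lemma so2_bracket {X Y : Matrix (Fin (m + 2)) (Fin (m + 2)) ℝ}
    (hX : so2mem m X) (hY : so2mem m Y) : so2mem m (X * Y - Y * X) := by
  unfold so2mem at *
  have hX' : X.transpose * eta m = -(eta m * X) := eq_neg_of_add_eq_zero_left hX
  have hY' : Y.transpose * eta m = -(eta m * Y) := eq_neg_of_add_eq_zero_left hY
  have e1 : Y.transpose * X.transpose * eta m = eta m * (Y * X) := by
    rw [Matrix.mul_assoc, hX', Matrix.mul_neg, ← Matrix.mul_assoc, hY', Matrix.neg_mul,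
      neg_neg, Matrix.mul_assoc]
  have e2 : X.transpose * Y.transpose * eta m = eta m * (X * Y) := by
    rw [Matrix.mul_assoc, hY', Matrix.mul_neg, ← Matrix.mul_assoc, hX', Matrix.neg_mul,
      neg_neg, Matrix.mul_assoc]
  calc (X * Y - Y * X).transpose * eta m + eta m * (X * Y - Y * X)
      = (Y.transpose * X.transpose * eta m - X.transpose * Y.transpose * eta m) +
        (eta m * (X * Y) - eta m * (Y * X)) := by
        rw [Matrix.transpose_sub, Matrix.transpose_mul, Matrix.transpose_mul,
          Matrix.sub_mul, Matrix.mul_sub]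
    _ = 0 := by rw [e1, e2]; abel

lemma so1_bracket {X Y : Matrix (Fin (m + 2)) (Fin (m + 2)) ℝ}
    (hX : so1mem m X) (hY : so1mem m Y) : so1mem m (X * Y - Y * X) := by
  refine ⟨so2_bracket hX.1 hY.1, fun i => ⟨?_, ?_⟩⟩
  · simp only [Matrix.sub_apply, Matrix.mul_apply]
    simp [(fun k => (hY.2 k).1), (fun k => (hX.2 k).1)]
  · simp only [Matrix.sub_apply, Matrix.mul_apply]
    simp [(fun k => (hY.2 k).2), (fun k => (hX.2 k).2)]

lemma cmem_bracket {X Y : Matrix (Fin (m + 2)) (Fin (m + 2)) ℝ}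
    (hX : so1mem m X) (hY : cmem m Y) : cmem m (X * Y - Y * X) := by
  refine ⟨so2_bracket hX.1 hY.1, fun i j hi hj => ?_⟩
  simp only [Matrix.sub_apply, Matrix.mul_apply]
  have e1 : ∀ k, X i k * Y k j = 0 := by
    intro k
    by_cases hk : k = Fin.last (m + 1)
    · subst hk; rw [(hX.2 i).1]; ring
    · rw [hY.2 k j hk hj]; ring
  have e2 : ∀ k, Y i k * X k j = 0 := by
    intro k
    by_cases hk : k = Fin.last (m + 1)
    · subst hk; rw [(hX.2 j).2]; ring
    · rw [hY.2 i k hi hk]; ring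
  simp [e1, e2]

/-- part 5: the bracket acts on the last column by the standard representation -/
lemma bracket_col {Y Z : Matrix (Fin (m + 2)) (Fin (m + 2)) ℝ}
    (hY : so1mem m Y) (hZ : cmem m Z) (i : Fin (m + 1)) :
    (Y * Z - Z * Y) i.castSucc (Fin.last (m + 1)) =
      ∑ j : Fin (m + 1), Y i.castSucc j.castSucc * Z j.castSucc (Fin.last (m + 1)) := by
  simp only [Matrix.sub_apply, Matrix.mul_apply]
  have e1 : ∑ k, Z i.castSucc k * Y k (Fin.last (m + 1)) = 0 := by
    simp [fun k => (hY.2 k).1]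
  rw [e1, sub_zero, Fin.sum_univ_castSucc]
  rw [so2_last_last hZ.1]
  simp

/-- generator of so(m,1) -/
noncomputable def gen (m : ℕ) (a b : Fin (m + 1)) : Matrix (Fin (m + 2)) (Fin (m + 2)) ℝ :=
  Matrix.of fun i j =>
    if i = a.castSucc ∧ j = b.castSucc then 1
    else if i = b.castSucc ∧ j = a.castSucc then -(sgn m a * sgn m b) else 0

lemma gen_apply_cast (a b x y : Fin (m + 1)) :
    gen m a b x.castSucc y.castSucc =
      if x = a ∧ y = b then 1 else if x = b ∧ y = a then -(sgn m a * sgn m b) else 0 := by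
  simp [gen, Fin.castSucc_inj]

lemma gen_last_row (a b : Fin (m + 1)) (x : Fin (m + 2)) :
    gen m a b (Fin.last (m + 1)) x = 0 := by
  simp only [gen, Matrix.of_apply]
  rw [if_neg (fun h => castSucc_ne_last a h.1.symm),
    if_neg (fun h => castSucc_ne_last b h.1.symm)]

lemma gen_last_col (a b : Fin (m + 1)) (x : Fin (m + 2)) :
    gen m a b x (Fin.last (m + 1)) = 0 := by
  simp only [gen, Matrix.of_apply]
  rw [if_neg (fun h => castSucc_ne_last b h.2.symm),
    if_neg (fun h => castSucc_ne_last a h.2.symm)]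

lemma gen_so1 (a b : Fin (m + 1)) (hab : a ≠ b) : so1mem m (gen m a b) := by
  have hba : b ≠ a := Ne.symm hab
  refine ⟨?_, fun i => ⟨gen_last_col a b i, gen_last_row a b i⟩⟩
  rw [so2_iff]
  intro i j
  by_cases hi : i = Fin.last (m + 1)
  · subst hi
    rw [gen_last_row, gen_last_col]; ring
  · by_cases hj : j = Fin.last (m + 1)
    · subst hj
      rw [gen_last_row, gen_last_col]; ring
    · obtain ⟨x, rfl⟩ : ∃ x : Fin (m + 1), i = x.castSucc :=
        ⟨i.castPred hi, (Fin.castSucc_castPred i hi).symm⟩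
      obtain ⟨y, rfl⟩ : ∃ y : Fin (m + 1), j = y.castSucc :=
        ⟨j.castPred hj, (Fin.castSucc_castPred j hj).symm⟩
      rw [eps_castSucc, eps_castSucc]
      by_cases h1 : x = a ∧ y = b
      · rw [h1.1, h1.2]
        rw [show gen m a b b.castSucc a.castSucc = -(sgn m a * sgn m b) by
            rw [gen_apply_cast, if_neg (fun h => hba h.1), if_pos ⟨rfl, rfl⟩],
          show gen m a b a.castSucc b.castSucc = 1 by
            rw [gen_apply_cast, if_pos ⟨rfl, rfl⟩]]
        linear_combination (-(sgn m a)) * sgn_mul_self (m := m) b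
      · by_cases h2 : x = b ∧ y = a
        · rw [h2.1, h2.2]
          rw [show gen m a b a.castSucc b.castSucc = 1 by
              rw [gen_apply_cast, if_pos ⟨rfl, rfl⟩],
            show gen m a b b.castSucc a.castSucc = -(sgn m a * sgn m b) by
              rw [gen_apply_cast, if_neg (fun h => hba h.1), if_pos ⟨rfl, rfl⟩]]
          linear_combination (-(sgn m a)) * sgn_mul_self (m := m) b
        · rw [show gen m a b y.castSucc x.castSucc = 0 by
              rw [gen_apply_cast, if_neg (fun h => h2 ⟨h.2, h.1⟩),
                if_neg (fun h => h1 ⟨h.2, h.1⟩)],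
            show gen m a b x.castSucc y.castSucc = 0 by
              rw [gen_apply_cast, if_neg h1, if_neg h2]]
          ring

/-- action of gen on a column vector -/
lemma gen_action (a b : Fin (m + 1)) (hab : a ≠ b) (c : Fin (m + 1) → ℝ) (i : Fin (m + 1)) :
    ∑ j : Fin (m + 1), gen m a b i.castSucc j.castSucc * c j =
      (if i = a then c b else if i = b then -(sgn m a * sgn m b) * c a else 0) := by
  by_cases hia : i = a
  · have hib : i ≠ b := fun h => hab (hia ▸ h)
    rw [if_pos hia]
    have step : ∀ j ∈ Finset.univ, gen m a b i.castSucc j.castSucc * c j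
        = (if j = b then c j else 0) := by
      intro j _
      rw [gen_apply_cast]
      by_cases hjb : j = b
      · rw [if_pos ⟨hia, hjb⟩, if_pos hjb, one_mul]
      · rw [if_neg (fun h => hjb h.2), if_neg (fun h => hib h.1), if_neg hjb, zero_mul]
    rw [Finset.sum_congr rfl step, Finset.sum_ite_eq' Finset.univ b c]
    simp
  · rw [if_neg hia]
    by_cases hib : i = b
    · rw [if_pos hib]
      have step : ∀ j ∈ Finset.univ, gen m a b i.castSucc j.castSucc * c j
          = (if j = a then -(sgn m a * sgn m b) * c j else 0) := by
        intro j _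
        rw [gen_apply_cast]
        by_cases hja : j = a
        · rw [if_neg (fun h => hia h.1), if_pos ⟨hib, hja⟩, if_pos hja]
        · rw [if_neg (fun h => hia h.1), if_neg (fun h => hja h.2), if_neg hja, zero_mul]
      rw [Finset.sum_congr rfl step,
        Finset.sum_ite_eq' Finset.univ a (fun j => -(sgn m a * sgn m b) * c j)]
      simp
    · have step : ∀ j ∈ Finset.univ, gen m a b i.castSucc j.castSucc * c j = 0 := by
        intro j _
        rw [gen_apply_cast]
        rw [if_neg (fun h => hia h.1), if_neg (fun h => hib h.1), zero_mul]
      rw [Finset.sum_congr rfl step, Finset.sum_const_zero, if_neg hib]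


lemma exists_third (hm : 2 ≤ m) (j k : Fin (m + 1)) : ∃ i : Fin (m + 1), i ≠ j ∧ i ≠ k := by
  by_contra h
  push_neg at h
  have h0 := h ⟨0, by omega⟩
  have h1 := h ⟨1, by omega⟩
  have h2 := h ⟨2, by omega⟩
  simp only [ne_eq, Fin.ext_iff] at h0 h1 h2
  omega

lemma so1mem_zero : so1mem m (0 : Matrix (Fin (m + 2)) (Fin (m + 2)) ℝ) := by
  refine ⟨?_, fun i => ⟨rfl, rfl⟩⟩
  unfold so2mem
  simp

lemma sum_single (c : Fin (m + 1) → ℝ) :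
    c = ∑ j, c j • (Pi.single j (1 : ℝ) : Fin (m + 1) → ℝ) := by
  funext l
  rw [Finset.sum_apply]
  simp [Pi.single_apply, Finset.sum_ite_eq]

end aux10

open stmt10 in
/-- Remark 6.2: `so(m, 2) = so(m, 1) ⊕ ℝ^{m+1}` as `so(m, 1)`-modules, where `so(m,1)`
acts on itself by the adjoint action and on `ℝ^{m+1}` (the complement, identified with
`ℝ^{m+1}` via the last column) by the natural representation; consequently the only Lie
subalgebra of `so(m, 2)` strictly containing `so(m, 1)` is `so(m, 2)` itself. -/
theorem stmt10 (m : ℕ) (hm : 2 ≤ m) :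
    -- direct sum decomposition
    (∀ X, so2mem m X →
      ∃! p : Matrix (Fin (m + 2)) (Fin (m + 2)) ℝ × Matrix (Fin (m + 2)) (Fin (m + 2)) ℝ,
        so1mem m p.1 ∧ cmem m p.2 ∧ X = p.1 + p.2) ∧
    -- `so(m,1)` acts on itself by the adjoint action
    (∀ Y Z, so1mem m Y → so1mem m Z → so1mem m (Y * Z - Z * Y)) ∧
    -- the complement is an `so(m,1)`-submodule
    (∀ Y Z, so1mem m Y → cmem m Z → cmem m (Y * Z - Z * Y)) ∧
    -- the complement is identified with `ℝ^{m+1}` via the last column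
    (∀ c : Fin (m + 1) → ℝ, ∃! Z, cmem m Z ∧
      ∀ i : Fin (m + 1), Z i.castSucc (Fin.last (m + 1)) = c i) ∧
    -- under this identification, the adjoint action of `so(m,1)` on the complement is
    -- the natural (standard) representation on `ℝ^{m+1}`
    (∀ Y Z, so1mem m Y → cmem m Z → ∀ i : Fin (m + 1),
      (Y * Z - Z * Y) i.castSucc (Fin.last (m + 1)) =
        ∑ j : Fin (m + 1), Y i.castSucc j.castSucc * Z j.castSucc (Fin.last (m + 1))) ∧
    -- consequence: maximality of `so(m,1)` in `so(m,2)`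
    (∀ k : Set (Matrix (Fin (m + 2)) (Fin (m + 2)) ℝ),
      (∀ X ∈ k, so2mem m X) →
      (∀ X ∈ k, ∀ Y ∈ k, X + Y ∈ k) →
      (∀ c : ℝ, ∀ X ∈ k, c • X ∈ k) →
      (∀ X ∈ k, ∀ Y ∈ k, X * Y - Y * X ∈ k) →
      (∀ X, so1mem m X → X ∈ k) →
      k ≠ {X | so1mem m X} → k = {X | so2mem m X}) := by
  refine ⟨?_, fun Y Z hY hZ => aux10.so1_bracket hY hZ,
    fun Y Z hY hZ => aux10.cmem_bracket hY hZ, ?_,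
    fun Y Z hY hZ i => aux10.bracket_col hY hZ i, ?_⟩
  · -- part 1: decomposition
    intro X hX
    refine ⟨(aux10.proj1 m X, aux10.proj2 m X),
      ⟨aux10.proj1_so1 hX, aux10.proj2_cmem hX, aux10.proj_add X⟩, ?_⟩
    rintro ⟨Y, Z⟩ ⟨hY, hZ, hXYZ⟩
    dsimp only at hY hZ hXYZ ⊢
    have hYe : Y = aux10.proj1 m X := by
      ext i j
      by_cases hi : i = Fin.last (m + 1)
      · subst hi
        rw [(hY.2 j).2]
        simp [aux10.proj1]
      · by_cases hj : j = Fin.last (m + 1)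
        · subst hj
          rw [(hY.2 i).1]
          simp [aux10.proj1]
        · have hz := hZ.2 i j hi hj
          simp only [aux10.proj1, Matrix.of_apply, if_neg (not_or.mpr ⟨hi, hj⟩)]
          rw [hXYZ, Matrix.add_apply, hz, add_zero]
    have hZe : Z = aux10.proj2 m X := by
      have h1 : Y + Z = Y + aux10.proj2 m X := by
        rw [← hXYZ, hYe]
        exact aux10.proj_add X
      exact add_left_cancel h1
    exact Prod.ext hYe hZe
  · -- part 4
    intro c
    refine ⟨aux10.Zmat m c, ⟨aux10.Zmat_cmem c, aux10.Zmat_col c⟩, ?_⟩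
    rintro Z ⟨hZ, hcol⟩
    rw [aux10.cmem_eq_Zmat hZ]
    have hfc : (fun i => Z i.castSucc (Fin.last (m + 1))) = c := funext hcol
    rw [hfc]
  · -- part 6: maximality
    intro k hsub hadd hsmul hbr hcon hne
    have h0k : (0 : Matrix (Fin (m + 2)) (Fin (m + 2)) ℝ) ∈ k := hcon 0 aux10.so1mem_zero
    have hex : ∃ X ∈ k, ¬ so1mem m X := by
      by_contra h
      push_neg at h
      exact hne (Set.Subset.antisymm (fun X hX => h X hX) (fun X hX => hcon X hX))
    obtain ⟨X, hXk, hXns⟩ := hex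
    have hX2 : so2mem m X := hsub X hXk
    have hYk : aux10.proj1 m X ∈ k := hcon _ (aux10.proj1_so1 hX2)
    have hZk : aux10.proj2 m X ∈ k := by
      have hsub2 : aux10.proj2 m X = X - aux10.proj1 m X :=
        eq_sub_of_add_eq' (aux10.proj_add X).symm
      have heq : aux10.proj2 m X = X + (-1 : ℝ) • aux10.proj1 m X := by
        rw [hsub2, neg_one_smul, sub_eq_add_neg]
      rw [heq]
      exact hadd X hXk _ (hsmul (-1) _ hYk)
    set c0 : Fin (m + 1) → ℝ := fun i => aux10.proj2 m X i.castSucc (Fin.last (m + 1)) with hc0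
    have hZeq : aux10.proj2 m X = aux10.Zmat m c0 := aux10.cmem_eq_Zmat (aux10.proj2_cmem hX2)
    have hc0ne : ∃ i, c0 i ≠ 0 := by
      by_contra h
      push_neg at h
      have hc00 : c0 = 0 := funext h
      apply hXns
      have hZ0 : aux10.proj2 m X = 0 := by rw [hZeq, hc00, aux10.Zmat_zero]
      have hXp : X = aux10.proj1 m X := by
        have := aux10.proj_add (m := m) X
        rw [hZ0, add_zero] at this
        exact this
      rw [hXp]
      exact aux10.proj1_so1 hX2
    obtain ⟨k0, hk0⟩ := hc0ne
    -- the submodule of vectors whose Zmat lies in k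
    let W : Submodule ℝ (Fin (m + 1) → ℝ) :=
      { carrier := {c | aux10.Zmat m c ∈ k}
        add_mem' := fun {a b} ha hb => by
          simp only [Set.mem_setOf_eq] at *
          rw [aux10.Zmat_add]
          exact hadd _ ha _ hb
        zero_mem' := by
          simp only [Set.mem_setOf_eq, aux10.Zmat_zero]
          exact h0k
        smul_mem' := fun r c hc => by
          simp only [Set.mem_setOf_eq] at *
          rw [aux10.Zmat_smul]
          exact hsmul r _ hc }
    have hWmem : ∀ c, c ∈ W ↔ aux10.Zmat m c ∈ k := fun c => Iff.rfl
    have hWgen : ∀ (a b : Fin (m + 1)), a ≠ b → ∀ c ∈ W,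
        (fun i => if i = a then c b
          else if i = b then -(aux10.sgn m a * aux10.sgn m b) * c a else 0) ∈ W := by
      intro a b hab c hc
      have hg1 : so1mem m (aux10.gen m a b) := aux10.gen_so1 a b hab
      have hg : aux10.gen m a b ∈ k := hcon _ hg1
      set B := aux10.gen m a b * aux10.Zmat m c - aux10.Zmat m c * aux10.gen m a b with hB
      have hBk : B ∈ k := hbr _ hg _ ((hWmem c).mp hc)
      have hcm : cmem m B := aux10.cmem_bracket hg1 (aux10.Zmat_cmem c)
      have hEq : B = aux10.Zmat m (fun i => B i.castSucc (Fin.last (m + 1))) :=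
        aux10.cmem_eq_Zmat hcm
      have hcolv : (fun i => B i.castSucc (Fin.last (m + 1))) =
          (fun i => if i = a then c b
            else if i = b then -(aux10.sgn m a * aux10.sgn m b) * c a else 0) := by
        funext i
        rw [hB, aux10.bracket_col hg1 (aux10.Zmat_cmem c) i]
        rw [Finset.sum_congr rfl (fun j _ => by rw [aux10.Zmat_col])]
        exact aux10.gen_action a b hab c i
      rw [hWmem, ← hcolv, ← hEq]
      exact hBk
    have hc0W : c0 ∈ W := by
      rw [hWmem, ← hZeq]
      exact hZk
    have hsingle : ∀ j, j ≠ k0 → (Pi.single j (1 : ℝ) : Fin (m + 1) → ℝ) ∈ W := by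
      intro j hj
      obtain ⟨i, hij, hik⟩ := aux10.exists_third hm j k0
      have hv := hWgen i k0 hik c0 hc0W
      set v : Fin (m + 1) → ℝ := fun l => if l = i then c0 k0
        else if l = k0 then -(aux10.sgn m i * aux10.sgn m k0) * c0 i else 0 with hvdef
      have hw := hWgen j i (Ne.symm hij) v hv
      have hvi : v i = c0 k0 := by simp [hvdef]
      have hvj : v j = 0 := by
        rw [hvdef]
        simp only []
        rw [if_neg (fun h => hij h.symm), if_neg hj]
      have hweq : (fun l => if l = j then v i
          else if l = i then -(aux10.sgn m j * aux10.sgn m i) * v j else 0) =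
          (c0 k0) • (Pi.single j (1 : ℝ) : Fin (m + 1) → ℝ) := by
        funext l
        by_cases hlj : l = j
        · subst hlj
          rw [if_pos rfl, hvi]
          simp
        · rw [if_neg hlj]
          rw [Pi.smul_apply, Pi.single_eq_of_ne hlj, smul_zero]
          by_cases hli : l = i
          · rw [if_pos hli, hvj, mul_zero]
          · rw [if_neg hli]
      rw [hweq] at hw
      have hws := W.smul_mem (c0 k0)⁻¹ hw
      rwa [smul_smul, inv_mul_cancel₀ hk0, one_smul] at hws
    have hsingleAll : ∀ j, (Pi.single j (1 : ℝ) : Fin (m + 1) → ℝ) ∈ W := by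
      intro j
      by_cases hj : j = k0
      · subst hj
        obtain ⟨i, hij, _⟩ := aux10.exists_third hm j j
        have hi := hsingle i hij
        have hu := hWgen j i (Ne.symm hij) _ hi
        have hueq : (fun l => if l = j then (Pi.single i (1 : ℝ) : Fin (m + 1) → ℝ) i
            else if l = i then -(aux10.sgn m j * aux10.sgn m i) *
              (Pi.single i (1 : ℝ) : Fin (m + 1) → ℝ) j else 0) =
            (Pi.single j (1 : ℝ) : Fin (m + 1) → ℝ) := by
          funext l
          by_cases hlj : l = j
          · subst hlj
            rw [if_pos rfl, Pi.single_eq_same, Pi.single_eq_same]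
          · rw [if_neg hlj, Pi.single_eq_of_ne hlj]
            by_cases hli : l = i
            · rw [if_pos hli, Pi.single_eq_of_ne (Ne.symm hij), mul_zero]
            · rw [if_neg hli]
        rw [hueq] at hu
        exact hu
      · exact hsingle j hj
    have hallW : ∀ c : Fin (m + 1) → ℝ, c ∈ W := by
      intro c
      rw [aux10.sum_single c]
      exact Submodule.sum_mem W fun j _ => Submodule.smul_mem W _ (hsingleAll j)
    ext A
    simp only [Set.mem_setOf_eq]
    constructor
    · exact hsub A
    · intro hA
      have h1 : aux10.proj1 m A ∈ k := hcon _ (aux10.proj1_so1 hA)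
      have h2 : aux10.proj2 m A ∈ k := by
        have hmem := (hWmem _).mp (hallW (fun i => aux10.proj2 m A i.castSucc (Fin.last (m + 1))))
        rw [aux10.cmem_eq_Zmat (aux10.proj2_cmem hA)]
        exact hmem
      rw [show A = aux10.proj1 m A + aux10.proj2 m A from aux10.proj_add A]
      exact hadd _ h1 _ h2
end

section
/- The normalizer of so(m, 1) in so(m, 2) equals so(m, 1) for m ≥ 2: if Y ∈ so(m, 2) satisfies [Y, so(m, 1)] ⊆ so(m, 1), then Y ∈ so(m, 1). -/
/-- The matrix of the quadratic form `x₁² + ⋯ + x_m² − x_{m+1}² − x_{m+2}²`. -/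
def stmt11.eta (m : ℕ) : Matrix (Fin (m + 2)) (Fin (m + 2)) ℝ :=
  Matrix.diagonal (fun i => if (i : ℕ) < m then (1 : ℝ) else -1)

/-- Membership in `so(m, 2)`. -/
def stmt11.so2mem (m : ℕ) (X : Matrix (Fin (m + 2)) (Fin (m + 2)) ℝ) : Prop :=
  X.transpose * stmt11.eta m + stmt11.eta m * X = 0

/-- Membership in `so(m, 1)`, embedded block-diagonally as the subalgebra of `so(m, 2)`
annihilating the last basis vector. -/
def stmt11.so1mem (m : ℕ) (X : Matrix (Fin (m + 2)) (Fin (m + 2)) ℝ) : Prop :=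
  stmt11.so2mem m X ∧
    ∀ i : Fin (m + 2), X i (Fin.last (m + 1)) = 0 ∧ X (Fin.last (m + 1)) i = 0

namespace stmt11

lemma so2_entry {m : ℕ} {Y : Matrix (Fin (m + 2)) (Fin (m + 2)) ℝ} (h : so2mem m Y)
    (i j : Fin (m + 2)) :
    Y j i * (if (j : ℕ) < m then (1 : ℝ) else -1)
      + (if (i : ℕ) < m then (1 : ℝ) else -1) * Y i j = 0 := by
  have := congrFun (congrFun h i) j
  simpa [eta, Matrix.mul_diagonal, Matrix.diagonal_mul, Matrix.add_apply,
    Matrix.transpose_apply] using this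

end stmt11

open stmt11 in
/-- The normalizer of `so(m, 1)` in `so(m, 2)` equals `so(m, 1)` for `m ≥ 2`:
if `Y ∈ so(m, 2)` satisfies `[Y, so(m, 1)] ⊆ so(m, 1)` then `Y ∈ so(m, 1)`. -/
theorem stmt11 (m : ℕ) (hm : 2 ≤ m)
    (Y : Matrix (Fin (m + 2)) (Fin (m + 2)) ℝ) (hY : so2mem m Y)
    (hnorm : ∀ X, so1mem m X → so1mem m (Y * X - X * Y)) :
    so1mem m Y := by
  set L : Fin (m + 2) := Fin.last (m + 1) with hL
  have hLval : (L : ℕ) = m + 1 := rfl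
  have hεL : (if (L : ℕ) < m then (1 : ℝ) else -1) = -1 := by
    rw [hLval]; simp
  -- Y L L = 0
  have hLL : Y L L = 0 := by
    have := so2_entry hY L L
    rw [hεL] at this
    linarith
  -- column: Y b L = 0 for b ≠ L
  have key : ∀ b : Fin (m + 2), b ≠ L → Y b L = 0 := by
    intro b hb
    -- pick a ≠ b, a ≠ L among the small indices
    obtain ⟨a, hab, haL⟩ : ∃ a : Fin (m + 2), a ≠ b ∧ a ≠ L := by
      by_cases h0 : b = ⟨0, by omega⟩
      · refine ⟨⟨1, by omega⟩, ?_, ?_⟩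
        · subst h0
          intro h
          have := congrArg Fin.val h
          simp only [hLval] at this
          omega
        · intro h
          have := congrArg Fin.val h
          simp only [hLval] at this
          omega
      · refine ⟨⟨0, by omega⟩, fun h => h0 h.symm, ?_⟩
        intro h
        have := congrArg Fin.val h
        simp only [hLval] at this
        omega
    have hεb0 : (if (b : ℕ) < m then (1 : ℝ) else -1) ≠ 0 := by split <;> norm_num
    set X : Matrix (Fin (m + 2)) (Fin (m + 2)) ℝ :=
      Matrix.of fun i j => if i = a ∧ j = b then (if (b : ℕ) < m then (1 : ℝ) else -1)
        else if i = b ∧ j = a then -(if (a : ℕ) < m then (1 : ℝ) else -1) else 0 with hXdef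
    have hXentry : ∀ i j, X i j = if i = a ∧ j = b then (if (b : ℕ) < m then (1 : ℝ) else -1)
        else if i = b ∧ j = a then -(if (a : ℕ) < m then (1 : ℝ) else -1) else 0 :=
      fun i j => rfl
    have hXann : ∀ i : Fin (m + 2), X i L = 0 ∧ X L i = 0 := by
      intro i
      constructor <;> rw [hXentry] <;>
        simp [hb.symm, haL.symm, (Ne.symm hb : L ≠ b), (Ne.symm haL : L ≠ a)]
    have hX2 : so2mem m X := by
      funext i j
      have e1 : ((X.transpose * eta m + eta m * X) i j)
          = X j i * (if (j : ℕ) < m then (1 : ℝ) else -1)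
            + (if (i : ℕ) < m then (1 : ℝ) else -1) * X i j := by
        simp [eta, Matrix.mul_diagonal, Matrix.diagonal_mul, Matrix.add_apply,
          Matrix.transpose_apply]
      show ((X.transpose * eta m + eta m * X) i j) = 0
      rw [e1, hXentry, hXentry]
      by_cases hia : i = a <;> by_cases hib : i = b <;>
        by_cases hja : j = a <;> by_cases hjb : j = b <;>
        simp_all <;> (try (split_ifs <;> norm_num))
    have hc := hnorm X ⟨hX2, hXann⟩
    have h1 : (Y * X - X * Y) a L = 0 := (hc.2 a).1
    have hYX : (Y * X) a L = 0 := by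
      rw [Matrix.mul_apply]
      apply Finset.sum_eq_zero
      intro k _
      rw [(hXann k).1, mul_zero]
    have hXY : (X * Y) a L = (if (b : ℕ) < m then (1 : ℝ) else -1) * Y b L := by
      rw [Matrix.mul_apply]
      rw [Finset.sum_eq_single b]
      · rw [hXentry]; simp [hab]
      · intro k _ hk
        rw [hXentry]
        simp [hk, hab]
      · simp
    rw [Matrix.sub_apply, hYX, hXY] at h1
    have : (if (b : ℕ) < m then (1 : ℝ) else -1) * Y b L = 0 := by linarith
    exact (mul_eq_zero.mp this).resolve_left hεb0
  have hcol : ∀ i : Fin (m + 2), Y i L = 0 := by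
    intro i
    by_cases hi : i = L
    · rw [hi]; exact hLL
    · exact key i hi
  have hrow : ∀ i : Fin (m + 2), Y L i = 0 := by
    intro i
    have h := so2_entry hY i L
    rw [hεL, hcol i] at h
    have : Y L i * (-1 : ℝ) = 0 := by
      have := h; nlinarith [this]
    linarith
  exact ⟨hY, fun i => ⟨hcol i, hrow i⟩⟩
end
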